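/- Let k ≥ 5 be an integer and ℓ = ⌊(k-1)/2⌋. Let G be a 2-connected simple graph containing no cycle of length at least k, suppose the (ℓ-1)-disintegration H = H(G,ℓ-1) is non-empty, and let P = x₁x₂⋯x_m be an H-path of G with the maximum number of vertices among all H-paths, where m ≥ k. If (i,j) is a minimal crossing pair of P, then m - k < j - i - 1 ≤ m - 2ℓ; equivalently, 2ℓ ≤ |{x₁,…,x_i} ∪ {x_j,…,x_m}| ≤ 2ℓ + 1 in case m - k < j - i - 1, i.e. the cycle x₁⋯x_i x_m⋯x_j x₁ has length strictly less than k. -/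

import Mathlib

open SimpleGraph

variable {V : Type*}

/-- `x 1, …, x m` is a path in `G` (1-indexed): injective on `[1, m]`, with consecutive
vertices adjacent. -/
def IsIndexedPath (G : SimpleGraph V) (x : ℕ → V) (m : ℕ) : Prop :=
  (∀ i j, 1 ≤ i → i ≤ m → 1 ≤ j → j ≤ m → x i = x j → i = j) ∧
  ∀ i, 1 ≤ i → i < m → G.Adj (x i) (x (i + 1))

/-- The vertex set of the indexed path `x 1, …, x m`. -/
def pathVerts (x : ℕ → V) (m : ℕ) : Set V := {v | ∃ i, 1 ≤ i ∧ i ≤ m ∧ x i = v}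

/-- `N_P(v)`: the neighbours of `v` among the vertices of the path. -/
def pathNbrs (G : SimpleGraph V) (x : ℕ → V) (m : ℕ) (v : V) : Set V :=
  {u | u ∈ pathVerts x m ∧ G.Adj v u}

/-- `N_P⁻(x₁)`: immediate predecessors on `P` of the path-neighbours of `x₁`. -/
def predNbrs (G : SimpleGraph V) (x : ℕ → V) (m : ℕ) : Set V :=
  {v | ∃ i, 2 ≤ i ∧ i ≤ m ∧ G.Adj (x 1) (x i) ∧ v = x (i - 1)}

/-- `N_P⁺(x_m)`: immediate successors on `P` of the path-neighbours of `x_m`. -/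
def succNbrs (G : SimpleGraph V) (x : ℕ → V) (m : ℕ) : Set V :=
  {v | ∃ i, 1 ≤ i ∧ i < m ∧ G.Adj (x m) (x i) ∧ v = x (i + 1)}

/-- `G` contains no cycle of length at least `k`, i.e. `c(G) < k`. -/
def NoCycleGE (G : SimpleGraph V) (k : ℕ) : Prop :=
  ∀ (v : V) (w : G.Walk v v), w.IsCycle → w.length < k

/-- `G` contains a cycle of length at least `L`. -/
def HasCycleGE (G : SimpleGraph V) (L : ℕ) : Prop :=
  ∃ (v : V) (w : G.Walk v v), w.IsCycle ∧ L ≤ w.length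

/-- `G` is 2-connected: at least 3 vertices and deleting any single vertex leaves a
connected graph. -/
def TwoConnected (G : SimpleGraph V) [Fintype V] : Prop :=
  3 ≤ Fintype.card V ∧ ∀ v : V, (G.induce {u | u ≠ v}).Connected

/-- The vertex set of the `α`-disintegration `H(G, α)` of `G`: the largest vertex set on
which the induced subgraph has minimum degree at least `α + 1`. -/
noncomputable def disint (G : SimpleGraph V) (α : ℕ) : Set V :=
  ⋃₀ {S : Set V | ∀ v ∈ S, α + 1 ≤ {u | u ∈ S ∧ G.Adj v u}.ncard}

/-- `N_s(G)`: the number of `s`-cliques of `G`. -/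
noncomputable def cliqueCount (G : SimpleGraph V) (s : ℕ) : ℕ :=
  {S : Finset V | G.IsNClique s S}.ncard

/-- `h_s(n, k, a) = C(k - a, s) + (n - k + a) · C(a, s - 1)`. -/
def hval (n k a s : ℕ) : ℕ :=
  Nat.choose (k - a) s + (n - k + a) * Nat.choose a (s - 1)

/-- The graph `H(n, k, a)` on `Fin n`: the first `a` vertices form the set `A`, the next
`k - 2a` vertices form `C`, and the remaining `n - k + a` vertices form `B`; `A ∪ C` is a
clique and every vertex of `A` is joined to every vertex of `B`. -/
def Hgraph (n k a : ℕ) : SimpleGraph (Fin n) :=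
  SimpleGraph.fromRel fun i j =>
    (i.val < a ∧ k - a ≤ j.val) ∨ (i.val < k - a ∧ j.val < k - a)

/-- `G` is isomorphic to a subgraph of `H`. -/
def IsSubgraphOf {W : Type*} (G : SimpleGraph V) (H : SimpleGraph W) : Prop :=
  ∃ f : V → W, Function.Injective f ∧ ∀ a b, G.Adj a b → H.Adj (f a) (f b)

/-- Every connected component of `H` is a star: there is an assignment of a "center" to
each vertex such that every edge joins the common center of its endpoints to a leaf. -/
def IsStarForest (H : SimpleGraph V) : Prop :=
  ∃ f : V → V, ∀ a b, H.Adj a b → (f a = a ∧ f b = a) ∨ (f a = b ∧ f b = b)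

/-- `(i, j)` is a crossing pair of the indexed path `x 1, …, x m`. -/
def CrossPair (G : SimpleGraph V) (x : ℕ → V) (m i j : ℕ) : Prop :=
  1 ≤ i ∧ i < j ∧ j ≤ m ∧ G.Adj (x m) (x i) ∧ G.Adj (x 1) (x j)

/-- `(i, j)` is a minimal crossing pair of the indexed path `x 1, …, x m`. -/
def MinCrossPair (G : SimpleGraph V) (x : ℕ → V) (m i j : ℕ) : Prop :=
  CrossPair G x m i j ∧
    ∀ h, i < h → h < j → ¬G.Adj (x 1) (x h) ∧ ¬G.Adj (x m) (x h)

/-- One application of the successor operation along the path to a set of vertices. -/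
def succStep (x : ℕ → V) (m : ℕ) (S : Set V) : Set V :=
  {v | ∃ i, 1 ≤ i ∧ i < m ∧ x i ∈ S ∧ v = x (i + 1)}

/-- `N_P^{+i}(x_m)`: the `i`-fold iterated successor set of `N_P(x_m)` along the path. -/
def iterNbrSucc (G : SimpleGraph V) (x : ℕ → V) (m i : ℕ) : Set V :=
  (succStep x m)^[i] (pathNbrs G x m (x m))

/-!
The crossing pair `(i, j)` closes the cycle `x₁ ⋯ xᵢ x_m ⋯ x_j x₁` of length `i + (m - j) + 1`,
which is therefore `< k`. By maximality of `P`, every neighbour of `x₁` or `x_m` in `H` lies on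
`P`, so each endpoint has at least `ℓ` neighbours on `P`. No index `s` has `x₁ ~ x_s` and
`x_m ~ x_{s-1}`, since that would close a cycle through all `m ≥ k` vertices of `P`. Hence the
neighbours of `x₁` shifted one step back and the neighbours of `x_m` are `2ℓ` distinct indices,
and minimality of `(i, j)` confines them to `[1, i] ∪ [j - 1, m - 1]`.
-/

theorem pathVerts_reverse (x : ℕ → V) (m : ℕ) :
    pathVerts (fun n => x (m + 1 - n)) m = pathVerts x m := by
  ext v
  constructor
  · rintro ⟨i, hi, him, rfl⟩
    exact ⟨m + 1 - i, by omega, by omega, rfl⟩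
  · rintro ⟨i, hi, him, rfl⟩
    exact ⟨m + 1 - i, by omega, by omega, by simp only; congr 1; omega⟩

namespace IsIndexedPath

variable {G : SimpleGraph V} {x : ℕ → V} {m : ℕ}

theorem exists_isCycle (hP : IsIndexedPath G x m) (hm : 3 ≤ m) (hclose : G.Adj (x m) (x 1)) :
    ∃ (v : V) (c : G.Walk v v), c.IsCycle ∧ c.length = m := by
  set l := (List.range' 1 m).map x with hl
  have hne : l ≠ [] := by
    simp only [hl, ne_eq, List.map_eq_nil_iff, List.range'_eq_nil_iff]
    omega
  have hchain : l.IsChain G.Adj := by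
    rw [hl, List.isChain_map, List.isChain_iff_getElem]
    intro t ht
    simp only [List.length_range'] at ht
    simp only [List.getElem_range', one_mul]
    exact hP.2 (1 + t) (by omega) (by omega)
  have hnodup : l.Nodup := by
    refine (List.nodup_range').map_on fun a ha b hb hab => ?_
    simp only [List.mem_range'_1] at ha hb
    exact hP.1 a b (by omega) (by omega) (by omega) (by omega) hab
  have hhead : l.head hne = x 1 := by
    simp [hl, List.head_map, List.head_range']
  have hlast : l.getLast hne = x m := by
    simp [hl, List.getLast_map, List.getLast_range']
  let w : G.Walk (x 1) (x m) := (Walk.ofSupport l hne hchain).copy hhead hlast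
  let c := Walk.cons hclose w
  have hlen : c.length = m := by
    simp only [c, w, Walk.length_cons, Walk.length_copy, Walk.length_ofSupport, hl,
      List.length_map, List.length_range']
    omega
  refine ⟨x m, c, ?_, hlen⟩
  rw [Walk.isCycle_iff_isPath_tail_and_le_length, hlen]
  exact ⟨by simp [c, w, Walk.isPath_def, hnodup], hm⟩

theorem exists_isCycle_of_crossPair (hP : IsIndexedPath G x m) {p q : ℕ}
    (hpq : CrossPair G x m p q) (h3 : 3 ≤ p + (m - q) + 1) :
    ∃ (v : V) (c : G.Walk v v), c.IsCycle ∧ c.length = p + (m - q) + 1 := by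
  obtain ⟨hp, hpq, hqm, hmp, h1q⟩ := hpq
  set y : ℕ → V := fun t => if t ≤ p then x t else x (m + p + 1 - t)
  have hy_le : ∀ t ≤ p, y t = x t := fun t ht => if_pos ht
  have hy_gt : ∀ t, p < t → y t = x (m + p + 1 - t) := fun t ht => if_neg (by omega)
  have hcycle : IsIndexedPath G y (p + (m - q) + 1) := by
    refine ⟨fun a b ha han hb hbn hab => ?_, fun a ha han => ?_⟩
    · simp only [y] at hab
      split_ifs at hab <;>
        have := hP.1 _ _ (by omega) (by omega) (by omega) (by omega) hab <;> omega
    · rcases lt_trichotomy a p with hap | rfl | hap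
      · rw [hy_le a hap.le, hy_le (a + 1) hap]
        exact hP.2 a ha (by omega)
      · rw [hy_le a le_rfl, hy_gt (a + 1) (by omega), show m + a + 1 - (a + 1) = m by omega]
        exact hmp.symm
      · rw [hy_gt a hap, hy_gt (a + 1) (by omega),
          show m + p + 1 - a = m + p + 1 - (a + 1) + 1 by omega]
        exact (hP.2 _ (by omega) (by omega)).symm
  refine hcycle.exists_isCycle h3 ?_
  rw [hy_gt _ (by omega), hy_le 1 hp, show m + p + 1 - (p + (m - q) + 1) = q by omega]
  exact h1q.symm

theorem crossPair_length_lt (hP : IsIndexedPath G x m) {k p q : ℕ} (hcyc : NoCycleGE G k)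
    (hk : 3 ≤ k) (hpq : CrossPair G x m p q) : p + (m - q) + 1 < k := by
  by_contra! hge
  obtain ⟨v, c, hc, hlen⟩ := hP.exists_isCycle_of_crossPair hpq (by omega)
  exact absurd (hcyc v c hc) (by omega)

theorem snoc (hP : IsIndexedPath G x m) {v : V} (hv : v ∉ pathVerts x m)
    (hadj : G.Adj (x m) v) : IsIndexedPath G (fun n => if n ≤ m then x n else v) (m + 1) := by
  refine ⟨fun a b ha ham hb hbm hab => ?_, fun a ha ham => ?_⟩
  · simp only at hab
    split_ifs at hab with h₁ h₂ h₂
    · exact hP.1 a b ha h₁ hb h₂ hab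
    · exact absurd ⟨a, ha, h₁, hab⟩ hv
    · exact absurd ⟨b, hb, h₂, hab.symm⟩ hv
    · omega
  · rcases lt_or_eq_of_le (Nat.le_of_lt_succ ham) with ham | rfl
    · simpa [ham.le, Nat.succ_le_of_lt ham] using hP.2 a ha ham
    · simpa using hadj

theorem reverse (hP : IsIndexedPath G x m) : IsIndexedPath G (fun n => x (m + 1 - n)) m := by
  refine ⟨fun a b ha ham hb hbm hab => ?_, fun a ha ham => ?_⟩
  · have := hP.1 _ _ (by omega) (by omega) (by omega) (by omega) hab
    omega
  · simp only
    rw [show m + 1 - a = m + 1 - (a + 1) + 1 by omega]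
    exact (hP.2 _ (by omega) (by omega)).symm

theorem mem_pathVerts_of_adj_last {D : Set V} (hP : IsIndexedPath G x m)
    (hmax : ∀ (y : ℕ → V) (m' : ℕ), IsIndexedPath G y m' → y 1 ∈ D → y m' ∈ D → m' ≤ m)
    (hm : 1 ≤ m) (hx1 : x 1 ∈ D)
    {v : V} (hv : v ∈ D) (hadj : G.Adj (x m) v) : v ∈ pathVerts x m := by
  by_contra hnot
  have := hmax _ _ (hP.snoc hnot hadj) (by simpa [hm] using hx1) (by simpa using hv)
  omega

theorem mem_pathVerts_of_adj_first {D : Set V} (hP : IsIndexedPath G x m)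
    (hmax : ∀ (y : ℕ → V) (m' : ℕ), IsIndexedPath G y m' → y 1 ∈ D → y m' ∈ D → m' ≤ m)
    (hm : 1 ≤ m) (hxm : x m ∈ D)
    {v : V} (hv : v ∈ D) (hadj : G.Adj (x 1) v) : v ∈ pathVerts x m := by
  rw [← pathVerts_reverse]
  exact hP.reverse.mem_pathVerts_of_adj_last hmax hm (by simpa using hxm) hv (by simpa using hadj)

end IsIndexedPath

theorem succ_le_encard_disint_inter_neighborSet {G : SimpleGraph V} {α : ℕ} {v : V}
    (hv : v ∈ disint G α) : (α + 1 : ℕ∞) ≤ (disint G α ∩ G.neighborSet v).encard := by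
  obtain ⟨S, hS, hvS⟩ := Set.mem_sUnion.1 hv
  have hdeg := hS v hvS
  have hfin : {u | u ∈ S ∧ G.Adj v u}.Finite := Set.finite_of_ncard_pos (by omega)
  calc (α + 1 : ℕ∞) ≤ {u | u ∈ S ∧ G.Adj v u}.encard := by
        rw [← hfin.cast_ncard_eq]; exact_mod_cast hdeg
    _ ≤ (disint G α ∩ G.neighborSet v).encard :=
        Set.encard_le_encard fun u hu => ⟨Set.subset_sUnion_of_mem hS hu.1, hu.2⟩

open Classical in
noncomputable def nbrIdx (G : SimpleGraph V) (x : ℕ → V) (m : ℕ) (v : V) : Finset ℕ :=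
  (Finset.Icc 1 m).filter fun s => G.Adj v (x s)

theorem encard_inter_neighborSet_le_card_nbrIdx {G : SimpleGraph V} {x : ℕ → V} {m : ℕ}
    {S : Set V} {v : V} (hS : S ∩ G.neighborSet v ⊆ pathVerts x m) :
    (S ∩ G.neighborSet v).encard ≤ (nbrIdx G x m v).card := by
  calc (S ∩ G.neighborSet v).encard ≤ (x '' ↑(nbrIdx G x m v)).encard := by
        refine Set.encard_le_encard fun u hu => ?_
        obtain ⟨s, hs, hsm, rfl⟩ := hS hu
        exact ⟨s, by simpa [nbrIdx, hs, hsm] using hu.2, rfl⟩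
    _ ≤ (nbrIdx G x m v).card := by
        simpa using Set.encard_image_le x (nbrIdx G x m v : Set ℕ)

theorem card_nbrIdx_add_card_nbrIdx_le {G : SimpleGraph V} {x : ℕ → V} {m i j : ℕ}
    (hij : MinCrossPair G x m i j)
    (hconsec : ∀ s, 2 ≤ s → s ≤ m → G.Adj (x 1) (x s) → ¬G.Adj (x m) (x (s - 1))) :
    (nbrIdx G x m (x 1)).card + (nbrIdx G x m (x m)).card ≤ i + (m - j) + 1 := by
  obtain ⟨⟨hi, hij, hjm, -, -⟩, hmin⟩ := hij
  have hN₁ : ∀ s ∈ nbrIdx G x m (x 1),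
      2 ≤ s ∧ s ≤ m ∧ G.Adj (x 1) (x s) ∧ (s ≤ i ∨ j ≤ s) := by
    intro s hs
    obtain ⟨⟨hs1, hsm⟩, hadj⟩ := by simpa [nbrIdx] using hs
    have hs1' : s ≠ 1 := by rintro rfl; exact G.irrefl hadj
    exact ⟨by omega, hsm, hadj, by by_contra! h; exact (hmin s h.1 h.2).1 hadj⟩
  have hN₂ : ∀ s ∈ nbrIdx G x m (x m),
      1 ≤ s ∧ s < m ∧ G.Adj (x m) (x s) ∧ (s ≤ i ∨ j ≤ s) := by
    intro s hs
    obtain ⟨⟨hs1, hsm⟩, hadj⟩ := by simpa [nbrIdx] using hs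
    have hsm' : s ≠ m := by rintro rfl; exact G.irrefl hadj
    exact ⟨hs1, by omega, hadj, by by_contra! h; exact (hmin s h.1 h.2).2 hadj⟩
  set A := (nbrIdx G x m (x 1)).image (· - 1)
  have hA : A.card = (nbrIdx G x m (x 1)).card :=
    Finset.card_image_of_injOn fun a ha b hb hab => by
      have := (hN₁ a ha).1; have := (hN₁ b hb).1; omega
  have hdisj : Disjoint A (nbrIdx G x m (x m)) := by
    refine Finset.disjoint_left.2 fun t ht ht₂ => ?_
    obtain ⟨s, hs, rfl⟩ := Finset.mem_image.1 ht
    obtain ⟨hs2, hsm, hadj, -⟩ := hN₁ s hs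
    exact hconsec s hs2 hsm hadj (hN₂ _ ht₂).2.2.1
  have hsub : A ∪ nbrIdx G x m (x m) ⊆ Finset.Icc 1 i ∪ Finset.Icc (j - 1) (m - 1) := by
    intro t ht
    simp only [Finset.mem_union, Finset.mem_Icc]
    rcases Finset.mem_union.1 ht with ht | ht
    · obtain ⟨s, hs, rfl⟩ := Finset.mem_image.1 ht
      have := hN₁ s hs; omega
    · have := hN₂ t ht; omega
  calc (nbrIdx G x m (x 1)).card + (nbrIdx G x m (x m)).card
      = (A ∪ nbrIdx G x m (x m)).card := by rw [Finset.card_union_of_disjoint hdisj, hA]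
    _ ≤ (Finset.Icc 1 i ∪ Finset.Icc (j - 1) (m - 1)).card := Finset.card_le_card hsub
    _ ≤ (Finset.Icc 1 i).card + (Finset.Icc (j - 1) (m - 1)).card := Finset.card_union_le _ _
    _ = i + (m - j) + 1 := by simp only [Nat.card_Icc]; omega

theorem stmt_3_general (k ℓ : ℕ) (hk : 5 ≤ k) (hℓ : ℓ = (k - 1) / 2)
    {V : Type*} (G : SimpleGraph V)
    (hcyc : NoCycleGE G k) (D : Set V) (hD : D = disint G (ℓ - 1))
    (x : ℕ → V) (m : ℕ) (hP : IsIndexedPath G x m) (hx1 : x 1 ∈ D) (hxm : x m ∈ D)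
    (hmax : ∀ (y : ℕ → V) (m' : ℕ), IsIndexedPath G y m' → y 1 ∈ D → y m' ∈ D → m' ≤ m)
    (hmk : k ≤ m) (i j : ℕ) (hij : MinCrossPair G x m i j) :
    m - k < j - i - 1 ∧ j - i - 1 ≤ m - 2 * ℓ := by
  have hk3 : 3 ≤ k := by omega
  have hm : 1 ≤ m := by omega
  have hconsec : ∀ s, 2 ≤ s → s ≤ m → G.Adj (x 1) (x s) → ¬G.Adj (x m) (x (s - 1)) :=
    fun s hs hsm h1s hms => by
      have := hP.crossPair_length_lt hcyc hk3 ⟨by omega, by omega, hsm, hms, h1s⟩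
      omega
  have hdeg : ∀ v ∈ D, D ∩ G.neighborSet v ⊆ pathVerts x m → ℓ ≤ (nbrIdx G x m v).card := by
    intro v hv hon
    have := (succ_le_encard_disint_inter_neighborSet (hD ▸ hv)).trans
      (encard_inter_neighborSet_le_card_nbrIdx (hD ▸ hon))
    have hcard : ℓ - 1 + 1 ≤ (nbrIdx G x m v).card := by exact_mod_cast this
    omega
  have h₁ := hdeg _ hx1 fun v hv => hP.mem_pathVerts_of_adj_first hmax hm hxm hv.1 hv.2
  have h₂ := hdeg _ hxm fun v hv => hP.mem_pathVerts_of_adj_last hmax hm hx1 hv.1 hv.2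
  have hcard := card_nbrIdx_add_card_nbrIdx_le hij hconsec
  have hcross := hP.crossPair_length_lt hcyc hk3 hij.1
  obtain ⟨⟨-, hij, hjm, -, -⟩, -⟩ := hij
  omega

/-- Bounds on the length of a minimal crossing pair (Claim 3.2 (ii)). -/
theorem stmt_3 (k ℓ : ℕ) (hk : 5 ≤ k) (hℓ : ℓ = (k - 1) / 2)
    {V : Type*} [Fintype V] (G : SimpleGraph V) (h2c : TwoConnected G)
    (hcyc : NoCycleGE G k) (D : Set V) (hD : D = disint G (ℓ - 1)) (hne : D.Nonempty)
    (x : ℕ → V) (m : ℕ) (hP : IsIndexedPath G x m) (hx1 : x 1 ∈ D) (hxm : x m ∈ D)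
    (hmax : ∀ (y : ℕ → V) (m' : ℕ), IsIndexedPath G y m' → y 1 ∈ D → y m' ∈ D → m' ≤ m)
    (hmk : k ≤ m) (i j : ℕ) (hij : MinCrossPair G x m i j) :
    m - k < j - i - 1 ∧ j - i - 1 ≤ m - 2 * ℓ :=
  stmt_3_general k ℓ hk hℓ G hcyc D hD x m hP hx1 hxm hmax hmk i j hij
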